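/- Let L be the Laplacian of a connected graph and L⁺ its Moore–Penrose pseudoinverse. Then R(α,β) = L⁺_{αα} + L⁺_{ββ} − 2L⁺_{αβ} defines a metric on the vertex set: it is symmetric, nonnegative, zero iff α = β, and satisfies the triangle inequality. -/

import Mathlib

/-!
`L⁺` is symmetric by uniqueness of the Moore–Penrose inverse, and for a connected graph
`L L⁺ x = x` whenever `∑ x = 0`, since `ker L` consists of the constants. Hence the potential
`φ_ab = L⁺ (e_a - e_b)` satisfies `L φ_ab = e_a - e_b`, so by the maximum principle it is largest
at `a` and smallest at `b`; and `R(a,b) = φ_ab(a) - φ_ab(b)`. This gives `R ≥ 0`, and `R(a,b) = 0`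
forces `φ_ab` to be constant, hence `e_a - e_b = L φ_ab = 0`. Potentials add, `φ_ac = φ_ab + φ_bc`, so
`R(a,c) = (φ_ab(a) - φ_ab(c)) + (φ_bc(a) - φ_bc(c)) ≤ R(a,b) + R(b,c)` because `φ_ab` is minimal
and `φ_bc` maximal at `b`.
-/

open Matrix

/-- The four Moore–Penrose pseudoinverse conditions for real matrices. -/
def IsMoorePenrose {V : Type*} [Fintype V] [DecidableEq V] (L Lp : Matrix V V ℝ) : Prop :=
  L * Lp * L = L ∧ Lp * L * Lp = Lp ∧ (L * Lp)ᵀ = L * Lp ∧ (Lp * L)ᵀ = Lp * L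

/-- Effective resistance between two nodes, from the pseudoinverse of the Laplacian. -/
def effRes {V : Type*} (Lp : Matrix V V ℝ) (α β : V) : ℝ :=
  Lp α α + Lp β β - 2 * Lp α β

namespace IsMoorePenrose

variable {n : Type*} [Fintype n] [DecidableEq n] {A B C : Matrix n n ℝ}

theorem transpose (h : IsMoorePenrose A B) : IsMoorePenrose Aᵀ Bᵀ := by
  obtain ⟨h₁, h₂, h₃, h₄⟩ := h
  refine ⟨?_, ?_, ?_, ?_⟩
  · rw [← transpose_mul, ← transpose_mul, ← mul_assoc, h₁]
  · rw [← transpose_mul, ← transpose_mul, ← mul_assoc, h₂]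
  · rw [← transpose_mul, transpose_transpose, h₄]
  · rw [← transpose_mul, transpose_transpose, h₃]

theorem mul_eq_mul_left (hB : IsMoorePenrose A B) (hC : IsMoorePenrose A C) : A * B = A * C :=
  calc A * B = (A * C) * (A * B) := by rw [← mul_assoc, hC.1]
    _ = ((A * B) * (A * C))ᵀ := by rw [transpose_mul, hB.2.2.1, hC.2.2.1]
    _ = A * C := by rw [← mul_assoc, hB.1, hC.2.2.1]

theorem unique (hB : IsMoorePenrose A B) (hC : IsMoorePenrose A C) : B = C := by
  have hAB : A * B = A * C := hB.mul_eq_mul_left hC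
  have hBA : B * A = C * A := by
    simpa [← transpose_mul] using hB.transpose.mul_eq_mul_left hC.transpose
  calc B = B * A * B := hB.2.1.symm
    _ = C * A * C := by rw [hBA, mul_assoc, hAB, ← mul_assoc]
    _ = C := hC.2.1

theorem isSymm (hA : A.IsSymm) (h : IsMoorePenrose A B) : B.IsSymm :=
  (hA.eq ▸ h.transpose).unique h

theorem mul_comm_of_isSymm (hA : A.IsSymm) (h : IsMoorePenrose A B) : B * A = A * B := by
  rw [← h.2.2.2, transpose_mul, hA.eq, (h.isSymm hA).eq]

end IsMoorePenrose

namespace SimpleGraph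

variable {V : Type*} [Fintype V] [DecidableEq V] {G : SimpleGraph V} [DecidableRel G.Adj]

theorem sum_lapMatrix_mulVec (x : V → ℝ) : ∑ i, (G.lapMatrix ℝ *ᵥ x) i = 0 := by
  rw [← one_dotProduct, dotProduct_mulVec, ← mulVec_transpose, G.isSymm_lapMatrix (R := ℝ).eq,
    show (1 : V → ℝ) = fun _ ↦ 1 from rfl, lapMatrix_mulVec_const_eq_zero, zero_dotProduct]

theorem eq_zero_of_lapMatrix_mulVec_eq_zero (hG : G.Connected) {x : V → ℝ}
    (hx : G.lapMatrix ℝ *ᵥ x = 0) (hsum : ∑ i, x i = 0) : x = 0 := by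
  have hconst := G.lapMatrix_mulVec_eq_zero_iff_forall_reachable.1 hx
  ext i
  have hcard : (Fintype.card V : ℝ) * x i = 0 := by
    rw [← hsum, Finset.sum_congr rfl fun j _ ↦ hconst j i (hG.preconnected j i)]
    simp
  have : Nonempty V := hG.nonempty
  simpa [Fintype.card_ne_zero] using hcard

theorem lapMatrix_mulVec_mulVec_eq_self (hG : G.Connected) {Lp : Matrix V V ℝ}
    (hLp : IsMoorePenrose (G.lapMatrix ℝ) Lp) {x : V → ℝ} (hx : ∑ i, x i = 0) :
    G.lapMatrix ℝ *ᵥ (Lp *ᵥ x) = x := by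
  have hcomm := hLp.mul_comm_of_isSymm (G.isSymm_lapMatrix (R := ℝ))
  have hd : x - Lp *ᵥ (G.lapMatrix ℝ *ᵥ x) = 0 := by
    refine eq_zero_of_lapMatrix_mulVec_eq_zero hG ?_ ?_
    · rw [mulVec_sub, mulVec_mulVec, mulVec_mulVec, hLp.1, sub_self]
    · rw [mulVec_mulVec, hcomm, ← mulVec_mulVec]
      simp only [Pi.sub_apply, Finset.sum_sub_distrib, hx, sum_lapMatrix_mulVec, sub_zero]
  rw [mulVec_mulVec, ← hcomm, ← mulVec_mulVec]
  exact (sub_eq_zero.1 hd).symm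

theorem apply_eq_of_adj_of_lapMatrix_mulVec_nonpos {v : V → ℝ} {i j : V}
    (hmax : ∀ k, v k ≤ v i) (hi : (G.lapMatrix ℝ *ᵥ v) i ≤ 0) (hij : G.Adj i j) : v j = v i := by
  have hterm : ∀ k ∈ G.neighborFinset i, 0 ≤ v i - v k := fun k _ ↦ sub_nonneg.2 (hmax k)
  have hsum : ∑ k ∈ G.neighborFinset i, (v i - v k) = 0 := by
    refine le_antisymm ?_ (Finset.sum_nonneg hterm)
    rwa [Finset.sum_sub_distrib, Finset.sum_const, card_neighborFinset_eq_degree, nsmul_eq_mul,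
      ← lapMatrix_mulVec_apply]
  have hj := (Finset.sum_eq_zero_iff_of_nonneg hterm).1 hsum j ((G.mem_neighborFinset i j).2 hij)
  linarith

theorem apply_le_of_lapMatrix_mulVec_nonpos (hG : G.Connected) {v : V → ℝ} {a : V}
    (hv : ∀ i ≠ a, (G.lapMatrix ℝ *ᵥ v) i ≤ 0) (i : V) : v i ≤ v a := by
  have : Nonempty V := hG.nonempty
  obtain ⟨m, hm⟩ := Finite.exists_max v
  suffices ∀ {u w : V} (p : G.Walk u w), w = a → v u = v m → v a = v m from
    this (hG.preconnected m a).some rfl rfl ▸ hm i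
  intro u w p
  induction p with
  | nil => rintro rfl h; exact h
  | @cons x y z hxy _ ih =>
    intro hz hx
    by_cases hxa : x = a
    · exact hxa ▸ hx
    · exact ih hz (hx ▸ apply_eq_of_adj_of_lapMatrix_mulVec_nonpos (hx ▸ hm) (hv x hxa) hxy)

theorem apply_le_of_lapMatrix_mulVec_nonneg (hG : G.Connected) {v : V → ℝ} {b : V}
    (hv : ∀ i ≠ b, 0 ≤ (G.lapMatrix ℝ *ᵥ v) i) (i : V) : v b ≤ v i :=
  neg_le_neg_iff.1 <| apply_le_of_lapMatrix_mulVec_nonpos hG (v := -v)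
    (fun i hi ↦ by simpa [mulVec_neg] using hv i hi) i

end SimpleGraph

theorem effRes_comm {V : Type*} {Lp : Matrix V V ℝ} (hLp : Lp.IsSymm) (a b : V) :
    effRes Lp a b = effRes Lp b a := by
  rw [effRes, effRes, hLp.apply a b]
  ring

section EffectiveResistance

variable {V : Type*} [Fintype V] [DecidableEq V] {G : SimpleGraph V} [DecidableRel G.Adj]
  {Lp : Matrix V V ℝ}

def unitPotential (Lp : Matrix V V ℝ) (a b : V) : V → ℝ :=
  Lp *ᵥ (Pi.single a 1 - Pi.single b 1)

theorem unitPotential_apply (a b i : V) : unitPotential Lp a b i = Lp i a - Lp i b := by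
  simp [unitPotential, mulVec_sub]

theorem unitPotential_add (a b c : V) :
    unitPotential Lp a b + unitPotential Lp b c = unitPotential Lp a c := by
  ext i
  simp only [Pi.add_apply, unitPotential_apply]
  ring

theorem effRes_eq_unitPotential_sub (hLp : Lp.IsSymm) (a b : V) :
    effRes Lp a b = unitPotential Lp a b a - unitPotential Lp a b b := by
  rw [effRes, unitPotential_apply, unitPotential_apply, hLp.apply a b]
  ring

theorem lapMatrix_mulVec_unitPotential (hG : G.Connected)
    (hLp : IsMoorePenrose (G.lapMatrix ℝ) Lp) (a b : V) :
    G.lapMatrix ℝ *ᵥ unitPotential Lp a b = Pi.single a 1 - Pi.single b 1 :=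
  SimpleGraph.lapMatrix_mulVec_mulVec_eq_self hG hLp (by simp [Finset.sum_sub_distrib])

theorem unitPotential_le_apply_source (hG : G.Connected)
    (hLp : IsMoorePenrose (G.lapMatrix ℝ) Lp) (a b i : V) :
    unitPotential Lp a b i ≤ unitPotential Lp a b a :=
  SimpleGraph.apply_le_of_lapMatrix_mulVec_nonpos hG (fun j hj ↦ by
    rw [lapMatrix_mulVec_unitPotential hG hLp, Pi.sub_apply, Pi.single_eq_of_ne hj, zero_sub,
      neg_nonpos]
    exact (show (0 : V → ℝ) ≤ Pi.single b 1 from Pi.single_nonneg.2 zero_le_one) j) i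

theorem unitPotential_target_le_apply (hG : G.Connected)
    (hLp : IsMoorePenrose (G.lapMatrix ℝ) Lp) (a b i : V) :
    unitPotential Lp a b b ≤ unitPotential Lp a b i :=
  SimpleGraph.apply_le_of_lapMatrix_mulVec_nonneg hG (fun j hj ↦ by
    rw [lapMatrix_mulVec_unitPotential hG hLp, Pi.sub_apply, Pi.single_eq_of_ne hj, sub_zero]
    exact (show (0 : V → ℝ) ≤ Pi.single a 1 from Pi.single_nonneg.2 zero_le_one) j) i

theorem effRes_nonneg (hG : G.Connected) (hLp : IsMoorePenrose (G.lapMatrix ℝ) Lp) (a b : V) :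
    0 ≤ effRes Lp a b := by
  rw [effRes_eq_unitPotential_sub (hLp.isSymm (G.isSymm_lapMatrix (R := ℝ)))]
  exact sub_nonneg.2 (unitPotential_le_apply_source hG hLp a b b)

theorem effRes_eq_zero_iff (hG : G.Connected) (hLp : IsMoorePenrose (G.lapMatrix ℝ) Lp)
    (a b : V) : effRes Lp a b = 0 ↔ a = b := by
  refine ⟨fun h ↦ ?_, fun h ↦ by rw [h, effRes]; ring⟩
  rw [effRes_eq_unitPotential_sub (hLp.isSymm (G.isSymm_lapMatrix (R := ℝ))), sub_eq_zero] at h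
  have hconst : ∀ i, unitPotential Lp a b i = unitPotential Lp a b a := fun i ↦
    le_antisymm (unitPotential_le_apply_source hG hLp a b i)
      (h ▸ unitPotential_target_le_apply hG hLp a b i)
  have hharm : G.lapMatrix ℝ *ᵥ unitPotential Lp a b = 0 :=
    G.lapMatrix_mulVec_eq_zero_iff_forall_reachable.2 fun i j _ ↦ (hconst i).trans (hconst j).symm
  by_contra hab
  simpa [lapMatrix_mulVec_unitPotential hG hLp, Pi.single_apply, hab] using congrFun hharm a

theorem effRes_le_add (hG : G.Connected) (hLp : IsMoorePenrose (G.lapMatrix ℝ) Lp)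
    (a b c : V) : effRes Lp a c ≤ effRes Lp a b + effRes Lp b c := by
  have hsymm := hLp.isSymm (G.isSymm_lapMatrix (R := ℝ))
  simp only [effRes_eq_unitPotential_sub hsymm, ← unitPotential_add a b c, Pi.add_apply]
  linarith [unitPotential_target_le_apply hG hLp a b c, unitPotential_le_apply_source hG hLp b c a]

end EffectiveResistance

/-- For a connected finite graph with Laplacian `L` and Moore–Penrose pseudoinverse `L⁺`,
the effective resistance `R(α,β) = L⁺_{αα} + L⁺_{ββ} - 2 L⁺_{αβ}` is a metric on the
vertex set: symmetric, nonnegative, zero iff the vertices coincide, and satisfying the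
triangle inequality. -/
theorem effective_resistance_is_metric {V : Type*} [Fintype V] [DecidableEq V]
    (G : SimpleGraph V) [DecidableRel G.Adj] (hconn : G.Connected)
    (Lp : Matrix V V ℝ) (hLp : IsMoorePenrose (G.lapMatrix ℝ) Lp) :
    (∀ α β : V, effRes Lp α β = effRes Lp β α) ∧
    (∀ α β : V, 0 ≤ effRes Lp α β) ∧
    (∀ α β : V, effRes Lp α β = 0 ↔ α = β) ∧
    (∀ α β γ : V, effRes Lp α γ ≤ effRes Lp α β + effRes Lp β γ) :=
  ⟨effRes_comm (hLp.isSymm (G.isSymm_lapMatrix (R := ℝ))), effRes_nonneg hconn hLp,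
    effRes_eq_zero_iff hconn hLp, effRes_le_add hconn hLp⟩
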